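/- If m, n, p ≥ 3, then for each top vertex v (one of x, y, z) of the link L_{m,n,p}, the subgraph induced on the closed ball of radius 2 around v is a tree; the same holds for each bottom vertex x̄, ȳ, z̄. -/

import Mathlib

/-- The generators of the presentation `I_{m,n,p}`:
`x, y, z`, the Artin generators `a, b, c`, and the extra generators
`d₃, …, d_m`, `e₃, …, e_n`, `f₃, …, f_p`. -/
inductive IGen (m n p : ℕ) where
  | x | y | z | a | b | c
  | d (i : Fin (m - 2))
  | e (i : Fin (n - 2))
  | f (i : Fin (p - 2))
deriving DecidableEq

/-- `dSeq m n p i` is `d_i` for `1 ≤ i ≤ m`, where `d₁ = a`, `d₂ = b`. -/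
def dSeq (m n p : ℕ) (i : ℕ) : IGen m n p :=
  if i = 1 then .a else if i = 2 then .b
  else if h : i - 3 < m - 2 then .d ⟨i - 3, h⟩ else .a

/-- `eSeq m n p i` is `e_i` for `1 ≤ i ≤ n`, where `e₁ = b`, `e₂ = c`. -/
def eSeq (m n p : ℕ) (i : ℕ) : IGen m n p :=
  if i = 1 then .b else if i = 2 then .c
  else if h : i - 3 < n - 2 then .e ⟨i - 3, h⟩ else .b

/-- `fSeq m n p i` is `f_i` for `1 ≤ i ≤ p`, where `f₁ = c`, `f₂ = a`. -/
def fSeq (m n p : ℕ) (i : ℕ) : IGen m n p :=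
  if i = 1 then .c else if i = 2 then .a
  else if h : i - 3 < p - 2 then .f ⟨i - 3, h⟩ else .c

/-- The triples `(w, g, h)` such that `w = g·h` is a relation of `I_{m,n,p}`. -/
def relTriples (m n p : ℕ) : Set (IGen m n p × IGen m n p × IGen m n p) :=
  {t | (∃ i : ℕ, 1 ≤ i ∧ i ≤ m ∧
          t = (.x, dSeq m n p i, dSeq m n p (i % m + 1))) ∨
       (∃ i : ℕ, 1 ≤ i ∧ i ≤ n ∧
          t = (.y, eSeq m n p i, eSeq m n p (i % n + 1))) ∨
       (∃ i : ℕ, 1 ≤ i ∧ i ≤ p ∧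
          t = (.z, fSeq m n p i, fSeq m n p (i % p + 1)))}

/-- Vertices of the link `L_{m,n,p}`: a pair of vertices for each generator of
`I_{m,n,p}`; the Boolean is `true` for the barred vertex (tail of the 1-cell)
and `false` for the unbarred vertex (head). -/
abbrev LinkVert (m n p : ℕ) := IGen m n p × Bool

/-- Each relation `w = g·h` (a triangular 2-cell) contributes to the link the three
corner edges `{ḡ, h}`, `{w, g}` and `{h̄, w̄}`. -/
def linkRel (m n p : ℕ) (u v : LinkVert m n p) : Prop :=
  ∃ t ∈ relTriples m n p,
    ((u, v) = ((t.2.1, true), (t.2.2, false)) ∨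
     (u, v) = ((t.1, false), (t.2.1, false)) ∨
     (u, v) = ((t.2.2, true), (t.1, true)))

/-- The link `L_{m,n,p}` of the unique 0-cell of the 2-complex `K_{m,n,p}`. -/
def Link (m n p : ℕ) : SimpleGraph (LinkVert m n p) :=
  SimpleGraph.fromRel (linkRel m n p)

/-- The level of a vertex of the link: `x̄, ȳ, z̄` at level 1; barred generators at
level 2; unbarred generators at level 3; `x, y, z` at level 4. -/
def lvl {m n p : ℕ} : LinkVert m n p → ℕ
  | (.x, true) => 1 | (.y, true) => 1 | (.z, true) => 1
  | (.x, false) => 4 | (.y, false) => 4 | (.z, false) => 4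
  | (_, true) => 2
  | (_, false) => 3

/-- The closed ball of radius 2 about a vertex `v` in the link. -/
def ballTwo (m n p : ℕ) (v : LinkVert m n p) : Set (LinkVert m n p) :=
  {u | ∃ w : (Link m n p).Walk v u, w.length ≤ 2}

namespace Ball2Tree

open SimpleGraph

/-! ### A generic criterion for a graph to be a tree -/

lemma isTree_of_parent {V : Type*} [DecidableEq V] (G : SimpleGraph V) (r : V)
    (par : V → V) (dep : V → ℕ)
    (h1 : ∀ v, v ≠ r → G.Adj v (par v))
    (h1' : ∀ v, v ≠ r → dep (par v) < dep v)
    (h2 : ∀ u v, G.Adj u v →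
      (u = par v ∧ dep u < dep v) ∨ (v = par u ∧ dep v < dep u)) :
    G.IsTree := by
  have reach : ∀ N v, dep v ≤ N → G.Reachable r v := by
    intro N
    induction N with
    | zero =>
      intro v hv
      by_cases hvr : v = r
      · subst hvr; exact Reachable.refl v
      · exact absurd (h1' v hvr) (by omega)
    | succ N ih =>
      intro v hv
      by_cases hvr : v = r
      · subst hvr; exact Reachable.refl v
      · have hp := h1' v hvr
        exact (ih (par v) (by omega)).trans (h1 v hvr).symm.reachable
  have : Nonempty V := ⟨r⟩
  constructor
  · exact ⟨fun u v => (reach (dep u) u le_rfl).symm.trans (reach (dep v) v le_rfl)⟩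
  · intro v c hc
    obtain ⟨u, hu, hmax⟩ : ∃ u ∈ c.support, ∀ w ∈ c.support, dep w ≤ dep u := by
      obtain ⟨u, hu, hmax⟩ := (c.support.toFinset).exists_max_image dep ⟨v, by simp⟩
      exact ⟨u, by simpa using hu, fun w hw => hmax w (by simpa using hw)⟩
    set c' := c.rotate u hu with hc'def
    have hc' : c'.IsCycle := hc.rotate hu
    have hmemsup : ∀ w, w ∈ c'.support → dep w ≤ dep u := by
      intro w hw
      have hrot := Walk.support_rotate c u hu
      rcases List.mem_cons.mp ((c'.support_eq_cons) ▸ hw) with h | h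
      · subst h; exact le_rfl
      · exact hmax w (List.mem_of_mem_tail (hrot.mem_iff.mp h))
    clear_value c'
    clear hc'def hc hu hmax
    cases c' with
    | nil => exact hc'.ne_nil rfl
    | cons hub q =>
      rename_i b
      have hlen : 2 ≤ q.length := by
        have := hc'.three_le_length
        simp only [Walk.length_cons] at this
        omega
      cases q with
      | nil => simp at hlen
      | cons hbw q2 =>
        obtain ⟨a2, q', h', heq⟩ := Walk.exists_cons_eq_concat hbw q2
        rw [heq] at hc' hmemsup
        have hb : dep b ≤ dep u := hmemsup b (by simp)
        have ha : dep a2 ≤ dep u := by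
          apply hmemsup
          simp only [Walk.support_cons, Walk.support_concat, List.concat_eq_append,
            List.mem_cons, List.mem_append]
          exact Or.inr (Or.inl q'.end_mem_support)
        have hb' : b = par u := by
          rcases h2 u b hub with ⟨h, hd⟩ | ⟨h, _⟩
          · omega
          · exact h
        have ha' : a2 = par u := by
          rcases h2 a2 u h' with ⟨h, _⟩ | ⟨h, hd⟩
          · exact h
          · omega
        have hba : b = a2 := hb'.trans ha'.symm
        subst hba
        have hnd : q'.support.Nodup := by
          have h3 := hc'.support_nodup
          simp only [Walk.support_cons, List.tail_cons, Walk.support_concat,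
            List.concat_eq_append] at h3
          exact (List.nodup_append.mp h3).1
        cases q' with
        | nil =>
          have := hc'.three_le_length
          simp [Walk.concat] at this
        | cons hq q'' =>
          simp only [Walk.support_cons, List.nodup_cons] at hnd
          exact hnd.1 q''.end_mem_support

variable {m n p : ℕ}

/-! ### Shape lemmas for the generator sequences -/

@[simp] lemma dSeq_ne_x (i : ℕ) : dSeq m n p i ≠ .x := by unfold dSeq; split_ifs <;> simp
@[simp] lemma dSeq_ne_y (i : ℕ) : dSeq m n p i ≠ .y := by unfold dSeq; split_ifs <;> simp
@[simp] lemma dSeq_ne_z (i : ℕ) : dSeq m n p i ≠ .z := by unfold dSeq; split_ifs <;> simp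
@[simp] lemma dSeq_ne_c (i : ℕ) : dSeq m n p i ≠ .c := by unfold dSeq; split_ifs <;> simp
@[simp] lemma dSeq_ne_e (i : ℕ) (j : Fin (n-2)) : dSeq m n p i ≠ .e j := by
  unfold dSeq; split_ifs <;> simp
@[simp] lemma dSeq_ne_f (i : ℕ) (j : Fin (p-2)) : dSeq m n p i ≠ .f j := by
  unfold dSeq; split_ifs <;> simp

@[simp] lemma eSeq_ne_x (i : ℕ) : eSeq m n p i ≠ .x := by unfold eSeq; split_ifs <;> simp
@[simp] lemma eSeq_ne_y (i : ℕ) : eSeq m n p i ≠ .y := by unfold eSeq; split_ifs <;> simp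
@[simp] lemma eSeq_ne_z (i : ℕ) : eSeq m n p i ≠ .z := by unfold eSeq; split_ifs <;> simp
@[simp] lemma eSeq_ne_a (i : ℕ) : eSeq m n p i ≠ .a := by unfold eSeq; split_ifs <;> simp
@[simp] lemma eSeq_ne_d (i : ℕ) (j : Fin (m-2)) : eSeq m n p i ≠ .d j := by
  unfold eSeq; split_ifs <;> simp
@[simp] lemma eSeq_ne_f (i : ℕ) (j : Fin (p-2)) : eSeq m n p i ≠ .f j := by
  unfold eSeq; split_ifs <;> simp

@[simp] lemma fSeq_ne_x (i : ℕ) : fSeq m n p i ≠ .x := by unfold fSeq; split_ifs <;> simp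
@[simp] lemma fSeq_ne_y (i : ℕ) : fSeq m n p i ≠ .y := by unfold fSeq; split_ifs <;> simp
@[simp] lemma fSeq_ne_z (i : ℕ) : fSeq m n p i ≠ .z := by unfold fSeq; split_ifs <;> simp
@[simp] lemma fSeq_ne_b (i : ℕ) : fSeq m n p i ≠ .b := by unfold fSeq; split_ifs <;> simp
@[simp] lemma fSeq_ne_d (i : ℕ) (j : Fin (m-2)) : fSeq m n p i ≠ .d j := by
  unfold fSeq; split_ifs <;> simp
@[simp] lemma fSeq_ne_e (i : ℕ) (j : Fin (n-2)) : fSeq m n p i ≠ .e j := by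
  unfold fSeq; split_ifs <;> simp

@[simp] lemma x_ne_dSeq (i : ℕ) : (.x : IGen m n p) ≠ dSeq m n p i := (dSeq_ne_x i).symm
@[simp] lemma y_ne_dSeq (i : ℕ) : (.y : IGen m n p) ≠ dSeq m n p i := (dSeq_ne_y i).symm
@[simp] lemma z_ne_dSeq (i : ℕ) : (.z : IGen m n p) ≠ dSeq m n p i := (dSeq_ne_z i).symm
@[simp] lemma c_ne_dSeq (i : ℕ) : (.c : IGen m n p) ≠ dSeq m n p i := (dSeq_ne_c i).symm
@[simp] lemma e_ne_dSeq (i : ℕ) (j : Fin (n-2)) : (.e j : IGen m n p) ≠ dSeq m n p i :=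
  (dSeq_ne_e i j).symm
@[simp] lemma f_ne_dSeq (i : ℕ) (j : Fin (p-2)) : (.f j : IGen m n p) ≠ dSeq m n p i :=
  (dSeq_ne_f i j).symm
@[simp] lemma x_ne_eSeq (i : ℕ) : (.x : IGen m n p) ≠ eSeq m n p i := (eSeq_ne_x i).symm
@[simp] lemma y_ne_eSeq (i : ℕ) : (.y : IGen m n p) ≠ eSeq m n p i := (eSeq_ne_y i).symm
@[simp] lemma z_ne_eSeq (i : ℕ) : (.z : IGen m n p) ≠ eSeq m n p i := (eSeq_ne_z i).symm
@[simp] lemma a_ne_eSeq (i : ℕ) : (.a : IGen m n p) ≠ eSeq m n p i := (eSeq_ne_a i).symm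
@[simp] lemma d_ne_eSeq (i : ℕ) (j : Fin (m-2)) : (.d j : IGen m n p) ≠ eSeq m n p i :=
  (eSeq_ne_d i j).symm
@[simp] lemma f_ne_eSeq (i : ℕ) (j : Fin (p-2)) : (.f j : IGen m n p) ≠ eSeq m n p i :=
  (eSeq_ne_f i j).symm
@[simp] lemma x_ne_fSeq (i : ℕ) : (.x : IGen m n p) ≠ fSeq m n p i := (fSeq_ne_x i).symm
@[simp] lemma y_ne_fSeq (i : ℕ) : (.y : IGen m n p) ≠ fSeq m n p i := (fSeq_ne_y i).symm
@[simp] lemma z_ne_fSeq (i : ℕ) : (.z : IGen m n p) ≠ fSeq m n p i := (fSeq_ne_z i).symm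
@[simp] lemma b_ne_fSeq (i : ℕ) : (.b : IGen m n p) ≠ fSeq m n p i := (fSeq_ne_b i).symm
@[simp] lemma d_ne_fSeq (i : ℕ) (j : Fin (m-2)) : (.d j : IGen m n p) ≠ fSeq m n p i :=
  (fSeq_ne_d i j).symm
@[simp] lemma e_ne_fSeq (i : ℕ) (j : Fin (n-2)) : (.e j : IGen m n p) ≠ fSeq m n p i :=
  (fSeq_ne_e i j).symm

lemma dSeq_eq_a_iff {i : ℕ} (h1 : 1 ≤ i) (h2 : i ≤ m) : dSeq m n p i = .a ↔ i = 1 := by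
  unfold dSeq; split_ifs with ha hb hc <;> simp_all <;> omega
lemma dSeq_eq_b_iff {i : ℕ} (h1 : 1 ≤ i) (h2 : i ≤ m) : dSeq m n p i = .b ↔ i = 2 := by
  unfold dSeq; split_ifs with ha hb hc <;> simp_all <;> omega
lemma dSeq_eq_d_iff {i : ℕ} (j : Fin (m-2)) (h1 : 1 ≤ i) (h2 : i ≤ m) :
    dSeq m n p i = .d j ↔ i = (j : ℕ) + 3 := by
  unfold dSeq; split_ifs with ha hb hc <;> simp_all [Fin.ext_iff] <;> omega
lemma eSeq_eq_b_iff {i : ℕ} (h1 : 1 ≤ i) (h2 : i ≤ n) : eSeq m n p i = .b ↔ i = 1 := by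
  unfold eSeq; split_ifs with ha hb hc <;> simp_all <;> omega
lemma eSeq_eq_c_iff {i : ℕ} (h1 : 1 ≤ i) (h2 : i ≤ n) : eSeq m n p i = .c ↔ i = 2 := by
  unfold eSeq; split_ifs with ha hb hc <;> simp_all <;> omega
lemma eSeq_eq_e_iff {i : ℕ} (j : Fin (n-2)) (h1 : 1 ≤ i) (h2 : i ≤ n) :
    eSeq m n p i = .e j ↔ i = (j : ℕ) + 3 := by
  unfold eSeq; split_ifs with ha hb hc <;> simp_all [Fin.ext_iff] <;> omega
lemma fSeq_eq_c_iff {i : ℕ} (h1 : 1 ≤ i) (h2 : i ≤ p) : fSeq m n p i = .c ↔ i = 1 := by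
  unfold fSeq; split_ifs with ha hb hc <;> simp_all <;> omega
lemma fSeq_eq_a_iff {i : ℕ} (h1 : 1 ≤ i) (h2 : i ≤ p) : fSeq m n p i = .a ↔ i = 2 := by
  unfold fSeq; split_ifs with ha hb hc <;> simp_all <;> omega
lemma fSeq_eq_f_iff {i : ℕ} (j : Fin (p-2)) (h1 : 1 ≤ i) (h2 : i ≤ p) :
    fSeq m n p i = .f j ↔ i = (j : ℕ) + 3 := by
  unfold fSeq; split_ifs with ha hb hc <;> simp_all [Fin.ext_iff] <;> omega

lemma mod_succ_mem {i q : ℕ} (h1 : 1 ≤ i) (h2 : i ≤ q) : 1 ≤ i % q + 1 ∧ i % q + 1 ≤ q := by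
  have : i % q < q := Nat.mod_lt _ (by omega)
  omega

lemma mod_succ_eq {i q : ℕ} (h1 : 1 ≤ i) (h2 : i ≤ q) :
    i % q + 1 = if i = q then 1 else i + 1 := by
  split_ifs with h
  · subst h; simp [Nat.mod_self]
  · rw [Nat.mod_eq_of_lt (by omega)]

lemma dSeq_mod_succ {i : ℕ} (hm : 3 ≤ m) (h1 : 1 ≤ i) (h2 : i ≤ m) :
    dSeq m n p (i % m + 1) = dSeq m n p (i + 1) := by
  rw [mod_succ_eq h1 h2]
  split_ifs with h
  · subst h
    unfold dSeq
    split_ifs <;> first | rfl | omega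
  · rfl

lemma dSeq_succ_eq_a_iff {i : ℕ} (hm : 3 ≤ m) (h1 : 1 ≤ i) (h2 : i ≤ m) :
    dSeq m n p (i % m + 1) = .a ↔ i = m := by
  rw [mod_succ_eq h1 h2]; split_ifs with h
  · simp [dSeq, h]
  · rw [dSeq_eq_a_iff (by omega) (by omega)]; omega
lemma dSeq_succ_eq_b_iff {i : ℕ} (hm : 3 ≤ m) (h1 : 1 ≤ i) (h2 : i ≤ m) :
    dSeq m n p (i % m + 1) = .b ↔ i = 1 := by
  rw [mod_succ_eq h1 h2]; split_ifs with h
  · subst h; simp [dSeq]; omega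
  · rw [dSeq_eq_b_iff (by omega) (by omega)]; omega
lemma dSeq_succ_eq_d_iff {i : ℕ} (j : Fin (m - 2)) (hm : 3 ≤ m) (h1 : 1 ≤ i) (h2 : i ≤ m) :
    dSeq m n p (i % m + 1) = .d j ↔ i = (j : ℕ) + 2 := by
  have hj := j.isLt
  rw [mod_succ_eq h1 h2]; split_ifs with h
  · subst h; simp [dSeq]; omega
  · rw [dSeq_eq_d_iff j (by omega) (by omega)]; omega
lemma eSeq_succ_eq_b_iff {i : ℕ} (hn : 3 ≤ n) (h1 : 1 ≤ i) (h2 : i ≤ n) :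
    eSeq m n p (i % n + 1) = .b ↔ i = n := by
  rw [mod_succ_eq h1 h2]; split_ifs with h
  · simp [eSeq, h]
  · rw [eSeq_eq_b_iff (by omega) (by omega)]; omega
lemma eSeq_succ_eq_c_iff {i : ℕ} (hn : 3 ≤ n) (h1 : 1 ≤ i) (h2 : i ≤ n) :
    eSeq m n p (i % n + 1) = .c ↔ i = 1 := by
  rw [mod_succ_eq h1 h2]; split_ifs with h
  · subst h; simp [eSeq]; omega
  · rw [eSeq_eq_c_iff (by omega) (by omega)]; omega
lemma eSeq_succ_eq_e_iff {i : ℕ} (j : Fin (n - 2)) (hn : 3 ≤ n) (h1 : 1 ≤ i) (h2 : i ≤ n) :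
    eSeq m n p (i % n + 1) = .e j ↔ i = (j : ℕ) + 2 := by
  have hj := j.isLt
  rw [mod_succ_eq h1 h2]; split_ifs with h
  · subst h; simp [eSeq]; omega
  · rw [eSeq_eq_e_iff j (by omega) (by omega)]; omega
lemma fSeq_succ_eq_c_iff {i : ℕ} (hp : 3 ≤ p) (h1 : 1 ≤ i) (h2 : i ≤ p) :
    fSeq m n p (i % p + 1) = .c ↔ i = p := by
  rw [mod_succ_eq h1 h2]; split_ifs with h
  · simp [fSeq, h]
  · rw [fSeq_eq_c_iff (by omega) (by omega)]; omega
lemma fSeq_succ_eq_a_iff {i : ℕ} (hp : 3 ≤ p) (h1 : 1 ≤ i) (h2 : i ≤ p) :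
    fSeq m n p (i % p + 1) = .a ↔ i = 1 := by
  rw [mod_succ_eq h1 h2]; split_ifs with h
  · subst h; simp [fSeq]; omega
  · rw [fSeq_eq_a_iff (by omega) (by omega)]; omega
lemma fSeq_succ_eq_f_iff {i : ℕ} (j : Fin (p - 2)) (hp : 3 ≤ p) (h1 : 1 ≤ i) (h2 : i ≤ p) :
    fSeq m n p (i % p + 1) = .f j ↔ i = (j : ℕ) + 2 := by
  have hj := j.isLt
  rw [mod_succ_eq h1 h2]; split_ifs with h
  · subst h; simp [fSeq]; omega
  · rw [fSeq_eq_f_iff j (by omega) (by omega)]; omega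

end Ball2Tree

namespace Ball2Tree

open SimpleGraph

variable {m n p : ℕ}



lemma link_adj {u v : LinkVert m n p} :
    (Link m n p).Adj u v ↔ u ≠ v ∧ (linkRel m n p u v ∨ linkRel m n p v u) :=
  SimpleGraph.fromRel_adj _ _ _

lemma linkRel_elim {u v : LinkVert m n p} (h : linkRel m n p u v) :
    (∃ i, 1 ≤ i ∧ i ≤ m ∧
      ((u = (dSeq m n p i, true) ∧ v = (dSeq m n p (i % m + 1), false)) ∨
       (u = (.x, false) ∧ v = (dSeq m n p i, false)) ∨
       (u = (dSeq m n p (i % m + 1), true) ∧ v = (.x, true)))) ∨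
    (∃ i, 1 ≤ i ∧ i ≤ n ∧
      ((u = (eSeq m n p i, true) ∧ v = (eSeq m n p (i % n + 1), false)) ∨
       (u = (.y, false) ∧ v = (eSeq m n p i, false)) ∨
       (u = (eSeq m n p (i % n + 1), true) ∧ v = (.y, true)))) ∨
    (∃ i, 1 ≤ i ∧ i ≤ p ∧
      ((u = (fSeq m n p i, true) ∧ v = (fSeq m n p (i % p + 1), false)) ∨
       (u = (.z, false) ∧ v = (fSeq m n p i, false)) ∨
       (u = (fSeq m n p (i % p + 1), true) ∧ v = (.z, true)))) := by
  obtain ⟨t, ht, hpair⟩ := h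
  rcases ht with ⟨i, h1, h2, rfl⟩ | ⟨i, h1, h2, rfl⟩ | ⟨i, h1, h2, rfl⟩
  · exact Or.inl ⟨i, h1, h2, by simpa [Prod.ext_iff] using hpair⟩
  · exact Or.inr (Or.inl ⟨i, h1, h2, by simpa [Prod.ext_iff] using hpair⟩)
  · exact Or.inr (Or.inr ⟨i, h1, h2, by simpa [Prod.ext_iff] using hpair⟩)

lemma linkRel_d1 {i : ℕ} (h1 : 1 ≤ i) (h2 : i ≤ m) :
    linkRel m n p (dSeq m n p i, true) (dSeq m n p (i % m + 1), false) :=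
  ⟨_, Or.inl ⟨i, h1, h2, rfl⟩, Or.inl rfl⟩
lemma linkRel_d2 {i : ℕ} (h1 : 1 ≤ i) (h2 : i ≤ m) :
    linkRel m n p (.x, false) (dSeq m n p i, false) :=
  ⟨_, Or.inl ⟨i, h1, h2, rfl⟩, Or.inr (Or.inl rfl)⟩
lemma linkRel_d3 {i : ℕ} (h1 : 1 ≤ i) (h2 : i ≤ m) :
    linkRel m n p (dSeq m n p (i % m + 1), true) (.x, true) :=
  ⟨_, Or.inl ⟨i, h1, h2, rfl⟩, Or.inr (Or.inr rfl)⟩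
lemma linkRel_e1 {i : ℕ} (h1 : 1 ≤ i) (h2 : i ≤ n) :
    linkRel m n p (eSeq m n p i, true) (eSeq m n p (i % n + 1), false) :=
  ⟨_, Or.inr (Or.inl ⟨i, h1, h2, rfl⟩), Or.inl rfl⟩
lemma linkRel_e2 {i : ℕ} (h1 : 1 ≤ i) (h2 : i ≤ n) :
    linkRel m n p (.y, false) (eSeq m n p i, false) :=
  ⟨_, Or.inr (Or.inl ⟨i, h1, h2, rfl⟩), Or.inr (Or.inl rfl)⟩
lemma linkRel_e3 {i : ℕ} (h1 : 1 ≤ i) (h2 : i ≤ n) :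
    linkRel m n p (eSeq m n p (i % n + 1), true) (.y, true) :=
  ⟨_, Or.inr (Or.inl ⟨i, h1, h2, rfl⟩), Or.inr (Or.inr rfl)⟩
lemma linkRel_f1 {i : ℕ} (h1 : 1 ≤ i) (h2 : i ≤ p) :
    linkRel m n p (fSeq m n p i, true) (fSeq m n p (i % p + 1), false) :=
  ⟨_, Or.inr (Or.inr ⟨i, h1, h2, rfl⟩), Or.inl rfl⟩
lemma linkRel_f2 {i : ℕ} (h1 : 1 ≤ i) (h2 : i ≤ p) :
    linkRel m n p (.z, false) (fSeq m n p i, false) :=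
  ⟨_, Or.inr (Or.inr ⟨i, h1, h2, rfl⟩), Or.inr (Or.inl rfl)⟩
lemma linkRel_f3 {i : ℕ} (h1 : 1 ≤ i) (h2 : i ≤ p) :
    linkRel m n p (fSeq m n p (i % p + 1), true) (.z, true) :=
  ⟨_, Or.inr (Or.inr ⟨i, h1, h2, rfl⟩), Or.inr (Or.inr rfl)⟩


end Ball2Tree

namespace Ball2Tree

open SimpleGraph

variable {m n p : ℕ}

/-! ### The ball of radius 2 around the vertex `(x, false)` -/

/-- the set `{a, b, d₃, …}` of letters appearing in the relation for `x` -/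
def Dg (m n p : ℕ) (g : IGen m n p) : Prop := g = .a ∨ g = .b ∨ ∃ j, g = .d j

@[simp] lemma Dg_dSeq (i : ℕ) : Dg m n p (dSeq m n p i) := by
  unfold dSeq Dg; split_ifs <;> simp

lemma Dg_surj {g : IGen m n p} (hm : 3 ≤ m) (hg : Dg m n p g) :
    ∃ i, 1 ≤ i ∧ i ≤ m ∧ dSeq m n p i = g := by
  rcases hg with rfl | rfl | ⟨j, rfl⟩
  · exact ⟨1, le_rfl, by omega, rfl⟩
  · exact ⟨2, by omega, by omega, rfl⟩
  · have hj := j.isLt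
    exact ⟨(j : ℕ) + 3, by omega, by omega,
      (dSeq_eq_d_iff j (by omega) (by omega)).mpr rfl⟩

/-- the ball of radius two around `(x, false)`, described explicitly -/
def Sx (m n p : ℕ) : Set (LinkVert m n p) := fun v =>
  match v with
  | (g, false) => g = .x ∨ g = .y ∨ g = .z ∨ Dg m n p g
  | (g, true) => Dg m n p g ∨ g = .c ∨ g = eSeq m n p n

/-- the parent function on the ball around `(x, false)` -/
def parx (m n p : ℕ) : LinkVert m n p → LinkVert m n p := fun v =>
  match v with
  | (.y, false) => (.b, false)
  | (.z, false) => (.a, false)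
  | (.a, true) => (dSeq m n p 2, false)
  | (.b, true) => (dSeq m n p 3, false)
  | (.d j, true) => (dSeq m n p ((j : ℕ) + 4), false)
  | (.c, true) => (.a, false)
  | (.e _, true) => (.b, false)
  | _ => (.x, false)

/-- depth in the ball around `(x, false)` -/
def depx (m n p : ℕ) : LinkVert m n p → ℕ := fun v =>
  match v with
  | (.x, false) => 0
  | (.y, false) => 2
  | (.z, false) => 2
  | (_, false) => 1
  | (_, true) => 2

lemma parx_D_false {g : IGen m n p} (hg : Dg m n p g) : parx m n p (g, false) = (.x, false) := by
  rcases hg with rfl | rfl | ⟨j, rfl⟩ <;> rfl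

lemma parx_dSeq {i : ℕ} (h1 : 1 ≤ i) (h2 : i ≤ m) :
    parx m n p (dSeq m n p i, true) = (dSeq m n p (i + 1), false) := by
  rcases (by omega : i = 1 ∨ i = 2 ∨ 3 ≤ i) with rfl | rfl | h3
  · rfl
  · rfl
  · have hd : dSeq m n p i = .d ⟨i - 3, by omega⟩ :=
      (dSeq_eq_d_iff _ h1 h2).mpr (by simp; omega)
    rw [hd]
    show (dSeq m n p ((i - 3) + 4), false) = _
    congr 2
    omega

lemma depx_dSeq_false (i : ℕ) : depx m n p (dSeq m n p i, false) = 1 := by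
  unfold dSeq; split_ifs <;> rfl

lemma depx_D_false {g : IGen m n p} (hg : Dg m n p g) : depx m n p (g, false) = 1 := by
  rcases hg with rfl | rfl | ⟨j, rfl⟩ <;> rfl

lemma depx_true (g : IGen m n p) : depx m n p (g, true) = 2 := by
  cases g <;> rfl

/-- neighbours of the root `(x,false)` -/
lemma adj_rootx {v : LinkVert m n p} (h : (Link m n p).Adj (.x, false) v) :
    ∃ i, 1 ≤ i ∧ i ≤ m ∧ v = (dSeq m n p i, false) := by
  rw [link_adj] at h
  obtain ⟨hne, h | h⟩ := h <;>
    rcases linkRel_elim h with ⟨i, h1, h2, hc⟩ | ⟨i, h1, h2, hc⟩ | ⟨i, h1, h2, hc⟩ <;>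
    rcases hc with ⟨hu, hv⟩ | ⟨hu, hv⟩ | ⟨hu, hv⟩
  · exact absurd hu (by simp)
  · exact ⟨i, h1, h2, hv⟩
  · exact absurd hu (by simp)
  · exact absurd hu (by simp)
  · exact absurd hu (by simp)
  · exact absurd hu (by simp)
  · exact absurd hu (by simp)
  · exact absurd hu (by simp)
  · exact absurd hu (by simp)
  · exact absurd hv (by simp)
  · exact absurd hv (by simp)
  · exact absurd hv (by simp)
  · exact absurd hv (by simp)
  · exact absurd hv (by simp)
  · exact absurd hv (by simp)
  · exact absurd hv (by simp)
  · exact absurd hv (by simp)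
  · exact absurd hv (by simp)

/-- neighbours of depth-one vertices stay in the ball -/
lemma adj_D_mem {g : IGen m n p} {v : LinkVert m n p} (hm : 3 ≤ m) (hn : 3 ≤ n) (hp : 3 ≤ p)
    (hg : Dg m n p g) (h : (Link m n p).Adj (g, false) v) : v ∈ Sx m n p := by
  rw [link_adj] at h
  obtain ⟨hne, h | h⟩ := h
  · rcases linkRel_elim h with ⟨i, h1, h2, hc⟩ | ⟨i, h1, h2, hc⟩ | ⟨i, h1, h2, hc⟩ <;>
      rcases hc with ⟨hu, hv⟩ | ⟨hu, hv⟩ | ⟨hu, hv⟩ <;>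
      rcases hg with rfl | rfl | ⟨j, rfl⟩ <;> simp_all
  · rcases linkRel_elim h with ⟨i, h1, h2, hc⟩ | ⟨i, h1, h2, hc⟩ | ⟨i, h1, h2, hc⟩
    · rcases hc with ⟨hu, hv⟩ | ⟨hu, hv⟩ | ⟨hu, hv⟩
      · subst hu; exact Or.inl (Dg_dSeq i)
      · subst hu; exact Or.inl rfl
      · exact absurd hv (by simp)
    · rcases hc with ⟨hu, hv⟩ | ⟨hu, hv⟩ | ⟨hu, hv⟩
      · -- v = (eSeq i, true), (g,false) = (eSeq (i%n+1), false)
        subst hu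
        rcases hg with rfl | rfl | ⟨j, rfl⟩
        · exact absurd hv (by simp)
        · have : i = n := by
            have := (Prod.ext_iff.mp hv).1
            rw [eq_comm, eSeq_succ_eq_b_iff hn h1 h2] at this
            exact this
          subst this
          exact Or.inr (Or.inr rfl)
        · exact absurd hv (by simp)
      · subst hu; exact Or.inr (Or.inl rfl)
      · exact absurd hv (by simp)
    · rcases hc with ⟨hu, hv⟩ | ⟨hu, hv⟩ | ⟨hu, hv⟩
      · subst hu
        rcases hg with rfl | rfl | ⟨j, rfl⟩
        · have : i = 1 := by
            have := (Prod.ext_iff.mp hv).1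
            rw [eq_comm, fSeq_succ_eq_a_iff hp h1 h2] at this
            exact this
          subst this
          exact Or.inr (Or.inl rfl)
        · exact absurd hv (by simp)
        · exact absurd hv (by simp)
      · subst hu; exact Or.inr (Or.inr (Or.inl rfl))
      · exact absurd hv (by simp)

end Ball2Tree

namespace Ball2Tree

open SimpleGraph

variable {m n p : ℕ}

/-- every edge of the link inside the ball `Sx` is a parent edge -/
lemma rel_parx {u v : LinkVert m n p} (hm : 3 ≤ m) (hn : 3 ≤ n) (hp : 3 ≤ p)
    (hv : v ∈ Sx m n p) (hrel : linkRel m n p u v) :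
    (u = parx m n p v ∧ depx m n p u < depx m n p v) ∨
    (v = parx m n p u ∧ depx m n p v < depx m n p u) := by
  rcases linkRel_elim hrel with ⟨i, h1, h2, hc⟩ | ⟨i, h1, h2, hc⟩ | ⟨i, h1, h2, hc⟩
  · rcases hc with ⟨hu, hv'⟩ | ⟨hu, hv'⟩ | ⟨hu, hv'⟩
    · -- u = (dSeq i, true), v = (dSeq (i%m+1), false)
      subst hu; subst hv'
      right
      rw [parx_dSeq h1 h2, dSeq_mod_succ hm h1 h2]
      exact ⟨rfl, by rw [depx_dSeq_false, depx_true]; omega⟩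
    · -- u = (x,false), v = (dSeq i, false)
      subst hu; subst hv'
      left
      rw [parx_D_false (Dg_dSeq i)]
      exact ⟨rfl, by rw [depx_dSeq_false]; exact Nat.zero_lt_one⟩
    · -- v = (x, true) ∉ Sx
      subst hv'
      rcases hv with h | h | h <;> simp_all [Dg]
  · rcases hc with ⟨hu, hv'⟩ | ⟨hu, hv'⟩ | ⟨hu, hv'⟩
    · -- u = (eSeq i, true), v = (eSeq (i%n+1), false)
      subst hu; subst hv'
      have hi : i = n := by
        rcases hv with h | h | h | h
        · exact absurd h (by simp)
        · exact absurd h (by simp)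
        · exact absurd h (by simp)
        · rcases h with h | h | ⟨j, h⟩
          · exact absurd h (by simp)
          · exact (eSeq_succ_eq_b_iff hn h1 h2).mp h
          · exact absurd h (by simp)
      right
      have hval : eSeq m n p (i % n + 1) = .b := (eSeq_succ_eq_b_iff hn h1 h2).mpr hi
      rw [hval]
      have hen : eSeq m n p i = .e ⟨n - 3, by omega⟩ :=
        (eSeq_eq_e_iff _ h1 h2).mpr (by simp; omega)
      rw [hen]
      exact ⟨rfl, Nat.one_lt_two⟩
    · -- u = (y,false), v = (eSeq i, false)
      subst hu; subst hv'
      have hi : i = 1 := by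
        rcases hv with h | h | h | h
        · exact absurd h (by simp)
        · exact absurd h (by simp)
        · exact absurd h (by simp)
        · rcases h with h | h | ⟨j, h⟩
          · exact absurd h (by simp)
          · exact (eSeq_eq_b_iff h1 h2).mp h
          · exact absurd h (by simp)
      subst hi
      right
      show ((.b : IGen m n p), false) = _ ∧ _
      exact ⟨rfl, Nat.one_lt_two⟩
    · subst hv'
      rcases hv with h | h | h <;> simp_all [Dg]
  · rcases hc with ⟨hu, hv'⟩ | ⟨hu, hv'⟩ | ⟨hu, hv'⟩
    · -- u = (fSeq i, true), v = (fSeq (i%p+1), false)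
      subst hu; subst hv'
      have hi : i = 1 := by
        rcases hv with h | h | h | h
        · exact absurd h (by simp)
        · exact absurd h (by simp)
        · exact absurd h (by simp)
        · rcases h with h | h | ⟨j, h⟩
          · exact (fSeq_succ_eq_a_iff hp h1 h2).mp h
          · exact absurd h (by simp)
          · exact absurd h (by simp)
      subst hi
      right
      have hval : fSeq m n p (1 % p + 1) = .a := (fSeq_succ_eq_a_iff hp h1 h2).mpr rfl
      rw [hval]
      show ((.a : IGen m n p), false) = parx m n p (.c, true) ∧ _
      exact ⟨rfl, Nat.one_lt_two⟩
    · -- u = (z,false), v = (fSeq i, false)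
      subst hu; subst hv'
      have hi : i = 2 := by
        rcases hv with h | h | h | h
        · exact absurd h (by simp)
        · exact absurd h (by simp)
        · exact absurd h (by simp)
        · rcases h with h | h | ⟨j, h⟩
          · exact (fSeq_eq_a_iff h1 h2).mp h
          · exact absurd h (by simp)
          · exact absurd h (by simp)
      subst hi
      right
      show ((.a : IGen m n p), false) = _ ∧ _
      exact ⟨rfl, Nat.one_lt_two⟩
    · subst hv'
      rcases hv with h | h | h <;> simp_all [Dg]

end Ball2Tree

namespace Ball2Tree

open SimpleGraph

variable {m n p : ℕ}

lemma eSeq_n (hn : 3 ≤ n) : eSeq m n p n = .e ⟨n - 3, by omega⟩ := by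
  unfold eSeq; split_ifs <;> first | omega | rfl

lemma adj_root_dSeq {i : ℕ} (h1 : 1 ≤ i) (h2 : i ≤ m) :
    (Link m n p).Adj (.x, false) (dSeq m n p i, false) :=
  link_adj.mpr ⟨by simp [Prod.ext_iff], Or.inl (linkRel_d2 h1 h2)⟩

/-- members of `Sx` have a walk of length at most two from the root -/
lemma Sx_subset_ball (hm : 3 ≤ m) (hn : 3 ≤ n) (hp : 3 ≤ p) :
    Sx m n p ⊆ ballTwo m n p (.x, false) := by
  rintro ⟨g, b⟩ hv
  cases b with
  | false =>
    rcases hv with rfl | rfl | rfl | hg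
    · exact ⟨Walk.nil, by simp⟩
    · -- (y, false) : x - b - y
      refine ⟨Walk.cons (adj_root_dSeq (i := 2) (by omega) (by omega))
        (Walk.cons (link_adj.mpr ⟨by simp [Prod.ext_iff], Or.inr (linkRel_e2 le_rfl (by omega))⟩)
          Walk.nil), by simp⟩
    · -- (z, false) : x - a - z
      refine ⟨Walk.cons (adj_root_dSeq (i := 1) (by omega) (by omega))
        (Walk.cons (link_adj.mpr ⟨by simp [Prod.ext_iff],
          Or.inr (linkRel_f2 (i := 2) (by omega) (by omega))⟩)
          Walk.nil), by simp⟩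
    · obtain ⟨i, h1, h2, rfl⟩ := Dg_surj hm hg
      exact ⟨Walk.cons (adj_root_dSeq h1 h2) Walk.nil, by simp⟩
  | true =>
    rcases hv with hg | rfl | rfl
    · -- (dSeq i, true) : x - dSeq (i%m+1) - dSeq i
      obtain ⟨i, h1, h2, rfl⟩ := Dg_surj hm hg
      refine ⟨Walk.cons (adj_root_dSeq (mod_succ_mem h1 h2).1 (mod_succ_mem h1 h2).2)
        (Walk.cons (link_adj.mpr ⟨by simp [Prod.ext_iff], Or.inr (linkRel_d1 h1 h2)⟩)
          Walk.nil), by simp⟩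
    · -- (c, true) : x - a - c̄  using a = fSeq 2 = fSeq (1 % p + 1)
      have ha : fSeq m n p (1 % p + 1) = .a := by
        rw [Nat.mod_eq_of_lt (by omega)]; rfl
      have hrel := linkRel_f1 (m := m) (n := n) (p := p) (i := 1) le_rfl (by omega)
      rw [ha] at hrel
      refine ⟨Walk.cons (adj_root_dSeq (i := 1) (by omega) (by omega))
        (Walk.cons (link_adj.mpr ⟨by simp [Prod.ext_iff], Or.inr hrel⟩) Walk.nil), le_rfl⟩
    · -- (eSeq n, true) : x - b - ē_n   using b = eSeq (n % n + 1)
      have hb : eSeq m n p (n % n + 1) = .b := by rw [Nat.mod_self]; rfl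
      have hrel := linkRel_e1 (m := m) (n := n) (p := p) (i := n) (by omega) le_rfl
      rw [hb] at hrel
      refine ⟨Walk.cons (adj_root_dSeq (i := 2) (by omega) (by omega))
        (Walk.cons (link_adj.mpr ⟨by simp [Prod.ext_iff], Or.inr hrel⟩) Walk.nil), by simp⟩

lemma ball_eq_Sx (hm : 3 ≤ m) (hn : 3 ≤ n) (hp : 3 ≤ p) :
    ballTwo m n p (.x, false) = Sx m n p := by
  apply Set.Subset.antisymm _ (Sx_subset_ball hm hn hp)
  rintro v ⟨w, hw⟩
  cases w with
  | nil => exact Or.inl rfl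
  | cons h w' =>
    obtain ⟨i, h1, h2, rfl⟩ := adj_rootx h
    cases w' with
    | nil => exact Or.inr (Or.inr (Or.inr (Dg_dSeq i)))
    | cons h2' w'' =>
      cases w'' with
      | nil => exact adj_D_mem hm hn hp (Dg_dSeq i) h2'
      | cons h3 w''' => simp [Walk.length_cons] at hw

/-- The ball of radius 2 around `(x, false)` is a tree. -/
lemma core_false (hm : 3 ≤ m) (hn : 3 ≤ n) (hp : 3 ≤ p) :
    ((Link m n p).induce (ballTwo m n p (.x, false))).IsTree := by
  rw [ball_eq_Sx hm hn hp]
  refine isTree_of_parent _ ⟨(.x, false), Or.inl rfl⟩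
    (fun v => ⟨parx m n p v.1, ?memb⟩) (fun v => depx m n p v.1) ?h1 ?h1' ?h2
  case memb =>
    obtain ⟨⟨g, b⟩, hv⟩ := v
    cases g <;> cases b <;>
      first
        | exact Or.inl rfl
        | exact Or.inr (Or.inr (Or.inr (Or.inl rfl)))
        | exact Or.inr (Or.inr (Or.inr (Or.inr (Or.inl rfl))))
        | exact Or.inr (Or.inr (Or.inr (Dg_dSeq _)))
  case h1 =>
    rintro ⟨⟨g, b⟩, hv⟩ hne
    have hne' : (g, b) ≠ ((.x : IGen m n p), false) := fun hh => hne (Subtype.ext hh)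
    simp only [SimpleGraph.comap_adj, Function.Embedding.coe_subtype]
    cases b with
    | false =>
      rcases hv with rfl | rfl | rfl | hg
      · exact absurd rfl hne'
      · show (Link m n p).Adj (.y, false) (.b, false)
        exact link_adj.mpr ⟨by simp [Prod.ext_iff],
          Or.inl (linkRel_e2 (i := 1) le_rfl (by omega))⟩
      · show (Link m n p).Adj (.z, false) (.a, false)
        exact link_adj.mpr ⟨by simp [Prod.ext_iff],
          Or.inl (linkRel_f2 (i := 2) (by omega) (by omega))⟩
      · obtain ⟨i, h1, h2, rfl⟩ := Dg_surj hm hg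
        rw [parx_D_false (Dg_dSeq i)]
        exact link_adj.mpr ⟨by simp [Prod.ext_iff], Or.inr (linkRel_d2 h1 h2)⟩
    | true =>
      rcases hv with hg | rfl | rfl
      · obtain ⟨i, h1, h2, rfl⟩ := Dg_surj hm hg
        rw [parx_dSeq h1 h2, ← dSeq_mod_succ hm h1 h2]
        exact link_adj.mpr ⟨by simp [Prod.ext_iff], Or.inl (linkRel_d1 h1 h2)⟩
      · -- (c, true) ~ (a, false)
        have ha : fSeq m n p (1 % p + 1) = .a := by rw [Nat.mod_eq_of_lt (by omega)]; rfl
        have hrel := linkRel_f1 (m := m) (n := n) (p := p) (i := 1) le_rfl (by omega)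
        rw [ha] at hrel
        show (Link m n p).Adj (.c, true) (.a, false)
        exact link_adj.mpr ⟨by simp [Prod.ext_iff], Or.inl hrel⟩
      · -- (eSeq n, true) ~ (b, false)
        have hb : eSeq m n p (n % n + 1) = .b := by rw [Nat.mod_self]; rfl
        have hrel := linkRel_e1 (m := m) (n := n) (p := p) (i := n) (by omega) le_rfl
        rw [hb] at hrel
        rw [eSeq_n hn] at hrel
        rw [eSeq_n hn]
        show (Link m n p).Adj (.e ⟨n - 3, by omega⟩, true) (.b, false)
        exact link_adj.mpr ⟨by simp [Prod.ext_iff], Or.inl hrel⟩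
  case h1' =>
    rintro ⟨⟨g, b⟩, hv⟩ hne
    have hne' : (g, b) ≠ ((.x : IGen m n p), false) := fun hh => hne (Subtype.ext hh)
    simp only []
    cases b with
    | false =>
      rcases hv with rfl | rfl | rfl | hg
      · exact absurd rfl hne'
      · show depx m n p (.b, false) < depx m n p (.y, false); exact Nat.one_lt_two
      · show depx m n p (.a, false) < depx m n p (.z, false); exact Nat.one_lt_two
      · rw [parx_D_false hg, depx_D_false hg]
        exact Nat.zero_lt_one
    | true =>
      rcases hv with hg | rfl | rfl
      · obtain ⟨i, h1, h2, rfl⟩ := Dg_surj hm hg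
        rw [parx_dSeq h1 h2, depx_dSeq_false, depx_true]
        exact Nat.one_lt_two
      · show depx m n p (.a, false) < depx m n p (.c, true); exact Nat.one_lt_two
      · rw [eSeq_n hn]
        show depx m n p (.b, false) < depx m n p (.e ⟨n - 3, by omega⟩, true)
        exact Nat.one_lt_two
  case h2 =>
    rintro ⟨u, hu⟩ ⟨v, hv⟩ hadj
    simp only [SimpleGraph.comap_adj, Function.Embedding.coe_subtype] at hadj
    rw [link_adj] at hadj
    obtain ⟨hne, hrel | hrel⟩ := hadj
    · rcases rel_parx hm hn hp hv hrel with ⟨h, hd⟩ | ⟨h, hd⟩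
      · exact Or.inl ⟨Subtype.ext h, hd⟩
      · exact Or.inr ⟨Subtype.ext h, hd⟩
    · rcases rel_parx hm hn hp hu hrel with ⟨h, hd⟩ | ⟨h, hd⟩
      · exact Or.inr ⟨Subtype.ext h, hd⟩
      · exact Or.inl ⟨Subtype.ext h, hd⟩

end Ball2Tree

namespace Ball2Tree

open SimpleGraph

variable {m n p : ℕ}

/-! ### The ball of radius 2 around the vertex `(x, true)` -/

/-- the ball of radius two around `(x, true)`, described explicitly -/
def Sxt (m n p : ℕ) : Set (LinkVert m n p) := fun v =>
  match v with
  | (g, true) => g = .x ∨ g = .y ∨ g = .z ∨ Dg m n p g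
  | (g, false) => Dg m n p g ∨ g = .c ∨ g = fSeq m n p 3

/-- the parent function on the ball around `(x, true)` -/
def parxt (m n p : ℕ) : LinkVert m n p → LinkVert m n p := fun v =>
  match v with
  | (.a, false) => (dSeq m n p m, true)
  | (.b, false) => (.a, true)
  | (.d j, false) => (dSeq m n p ((j : ℕ) + 2), true)
  | (.c, false) => (.b, true)
  | (.f _, false) => (.a, true)
  | (.y, true) => (.b, true)
  | (.z, true) => (.a, true)
  | _ => (.x, true)

/-- depth in the ball around `(x, true)` -/
def depxt (m n p : ℕ) : LinkVert m n p → ℕ := fun v =>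
  match v with
  | (.x, true) => 0
  | (.y, true) => 2
  | (.z, true) => 2
  | (_, true) => 1
  | (_, false) => 2

lemma fSeq_3 (hp : 3 ≤ p) : fSeq m n p 3 = .f ⟨0, by omega⟩ := by
  unfold fSeq; split_ifs <;> first | omega | rfl

lemma parxt_D_true {g : IGen m n p} (hg : Dg m n p g) : parxt m n p (g, true) = (.x, true) := by
  rcases hg with rfl | rfl | ⟨j, rfl⟩ <;> rfl

lemma parxt_succ {i : ℕ} (hm : 3 ≤ m) (h1 : 1 ≤ i) (h2 : i ≤ m) :
    parxt m n p (dSeq m n p (i % m + 1), false) = (dSeq m n p i, true) := by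
  rw [mod_succ_eq h1 h2]
  split_ifs with h
  · subst h; rfl
  · rcases (by omega : i = 1 ∨ 2 ≤ i) with rfl | h3
    · rfl
    · have hd : dSeq m n p (i + 1) = .d ⟨i - 2, by omega⟩ :=
        (dSeq_eq_d_iff _ (by omega) (by omega)).mpr (by simp; omega)
      rw [hd]
      show (dSeq m n p ((i - 2) + 2), true) = _
      congr 2
      omega

lemma depxt_dSeq_true (i : ℕ) : depxt m n p (dSeq m n p i, true) = 1 := by
  unfold dSeq; split_ifs <;> rfl

lemma depxt_D_true {g : IGen m n p} (hg : Dg m n p g) : depxt m n p (g, true) = 1 := by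
  rcases hg with rfl | rfl | ⟨j, rfl⟩ <;> rfl

lemma depxt_false (g : IGen m n p) : depxt m n p (g, false) = 2 := by
  cases g <;> rfl

lemma pred_exists {i : ℕ} (h1 : 1 ≤ i) (h2 : i ≤ m) :
    ∃ k, 1 ≤ k ∧ k ≤ m ∧ k % m + 1 = i := by
  rcases (by omega : i = 1 ∨ 2 ≤ i) with rfl | h3
  · exact ⟨m, by omega, le_rfl, by rw [Nat.mod_self]⟩
  · exact ⟨i - 1, by omega, by omega, by rw [Nat.mod_eq_of_lt (by omega)]; omega⟩

/-- neighbours of the root `(x, true)` -/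
lemma adj_rootxt {v : LinkVert m n p} (h : (Link m n p).Adj (.x, true) v) :
    ∃ i, 1 ≤ i ∧ i ≤ m ∧ v = (dSeq m n p (i % m + 1), true) := by
  rw [link_adj] at h
  obtain ⟨hne, h | h⟩ := h <;>
    rcases linkRel_elim h with ⟨i, h1, h2, hc⟩ | ⟨i, h1, h2, hc⟩ | ⟨i, h1, h2, hc⟩ <;>
    rcases hc with ⟨hu, hv⟩ | ⟨hu, hv⟩ | ⟨hu, hv⟩
  · exact absurd hu (by simp)
  · exact absurd hu (by simp)
  · exact absurd hu (by simp)
  · exact absurd hu (by simp)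
  · exact absurd hu (by simp)
  · exact absurd hu (by simp)
  · exact absurd hu (by simp)
  · exact absurd hu (by simp)
  · exact absurd hu (by simp)
  · exact absurd hv (by simp)
  · exact absurd hv (by simp)
  · exact ⟨i, h1, h2, hu⟩
  · exact absurd hv (by simp)
  · exact absurd hv (by simp)
  · exact absurd hv (by simp)
  · exact absurd hv (by simp)
  · exact absurd hv (by simp)
  · exact absurd hv (by simp)

/-- neighbours of depth-one vertices of the ball around `(x,true)` stay in the ball -/
lemma adj_D_memt {g : IGen m n p} {v : LinkVert m n p} (hm : 3 ≤ m) (hn : 3 ≤ n) (hp : 3 ≤ p)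
    (hg : Dg m n p g) (h : (Link m n p).Adj (g, true) v) : v ∈ Sxt m n p := by
  rw [link_adj] at h
  obtain ⟨hne, h | h⟩ := h
  · rcases linkRel_elim h with ⟨i, h1, h2, hc⟩ | ⟨i, h1, h2, hc⟩ | ⟨i, h1, h2, hc⟩
    · rcases hc with ⟨hu, hv⟩ | ⟨hu, hv⟩ | ⟨hu, hv⟩
      · subst hv; exact Or.inl (Dg_dSeq _)
      · exact absurd hu (by simp)
      · subst hv; exact Or.inl rfl
    · rcases hc with ⟨hu, hv⟩ | ⟨hu, hv⟩ | ⟨hu, hv⟩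
      · -- u = (eSeq i, true) = (g, true), v = (eSeq (i%n+1), false)
        subst hv
        rcases hg with rfl | rfl | ⟨j, rfl⟩
        · exact absurd hu (by simp [Prod.ext_iff])
        · have hi : i = 1 := by
            have := (Prod.ext_iff.mp hu).1
            rw [eq_comm, eSeq_eq_b_iff h1 h2] at this
            exact this
          subst hi
          have : eSeq m n p (1 % n + 1) = .c := by
            rw [Nat.mod_eq_of_lt (by omega)]; rfl
          rw [this]
          exact Or.inr (Or.inl rfl)
        · exact absurd hu (by simp [Prod.ext_iff])
      · exact absurd hu (by simp)
      · -- u = (eSeq (i%n+1), true) = (g,true), v = (.y, true)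
        subst hv
        exact Or.inr (Or.inl rfl)
    · rcases hc with ⟨hu, hv⟩ | ⟨hu, hv⟩ | ⟨hu, hv⟩
      · subst hv
        rcases hg with rfl | rfl | ⟨j, rfl⟩
        · have hi : i = 2 := by
            have := (Prod.ext_iff.mp hu).1
            rw [eq_comm, fSeq_eq_a_iff h1 h2] at this
            exact this
          subst hi
          have : fSeq m n p (2 % p + 1) = fSeq m n p 3 := by
            rw [Nat.mod_eq_of_lt (by omega)]
          rw [this]
          exact Or.inr (Or.inr rfl)
        · exact absurd hu (by simp [Prod.ext_iff])
        · exact absurd hu (by simp [Prod.ext_iff])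
      · exact absurd hu (by simp)
      · subst hv
        exact Or.inr (Or.inr (Or.inl rfl))
  · rcases linkRel_elim h with ⟨i, h1, h2, hc⟩ | ⟨i, h1, h2, hc⟩ | ⟨i, h1, h2, hc⟩ <;>
      rcases hc with ⟨hu, hv⟩ | ⟨hu, hv⟩ | ⟨hu, hv⟩ <;>
      rcases hg with rfl | rfl | ⟨j, rfl⟩ <;> simp_all

end Ball2Tree

namespace Ball2Tree

open SimpleGraph

variable {m n p : ℕ}

/-- every edge of the link inside the ball `Sxt` is a parent edge -/
lemma rel_parxt {u v : LinkVert m n p} (hm : 3 ≤ m) (hn : 3 ≤ n) (hp : 3 ≤ p)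
    (hu : u ∈ Sxt m n p) (hrel : linkRel m n p u v) :
    (u = parxt m n p v ∧ depxt m n p u < depxt m n p v) ∨
    (v = parxt m n p u ∧ depxt m n p v < depxt m n p u) := by
  rcases linkRel_elim hrel with ⟨i, h1, h2, hc⟩ | ⟨i, h1, h2, hc⟩ | ⟨i, h1, h2, hc⟩
  · rcases hc with ⟨hu', hv'⟩ | ⟨hu', hv'⟩ | ⟨hu', hv'⟩
    · -- u = (dSeq i, true), v = (dSeq (i%m+1), false)
      subst hu'; subst hv'
      left
      rw [parxt_succ hm h1 h2]
      exact ⟨rfl, by rw [depxt_dSeq_true, depxt_false]; omega⟩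
    · -- u = (x, false) ∉ Sxt
      subst hu'
      rcases hu with h | h | h <;> simp_all [Dg]
    · -- u = (dSeq (i%m+1), true), v = (x, true)
      subst hu'; subst hv'
      right
      rw [parxt_D_true (Dg_dSeq _)]
      exact ⟨rfl, by rw [depxt_dSeq_true]; exact Nat.zero_lt_one⟩
  · rcases hc with ⟨hu', hv'⟩ | ⟨hu', hv'⟩ | ⟨hu', hv'⟩
    · -- u = (eSeq i, true), v = (eSeq (i%n+1), false)
      subst hu'; subst hv'
      have hi : i = 1 := by
        rcases hu with h | h | h | h
        · exact absurd h (by simp)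
        · exact absurd h (by simp)
        · exact absurd h (by simp)
        · rcases h with h | h | ⟨j, h⟩
          · exact absurd h (by simp)
          · exact (eSeq_eq_b_iff h1 h2).mp h
          · exact absurd h (by simp)
      subst hi
      left
      have hc' : eSeq m n p (1 % n + 1) = .c := by rw [Nat.mod_eq_of_lt (by omega)]; rfl
      rw [hc']
      show ((.b : IGen m n p), true) = _ ∧ _
      exact ⟨rfl, Nat.one_lt_two⟩
    · -- u = (y, false) ∉ Sxt
      subst hu'
      rcases hu with h | h | h <;> simp_all [Dg]
    · -- u = (eSeq (i%n+1), true), v = (y, true)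
      subst hu'; subst hv'
      have hi : i = n := by
        rcases hu with h | h | h | h
        · exact absurd h (by simp)
        · exact absurd h (by simp)
        · exact absurd h (by simp)
        · rcases h with h | h | ⟨j, h⟩
          · exact absurd h (by simp)
          · exact (eSeq_succ_eq_b_iff hn h1 h2).mp h
          · exact absurd h (by simp)
      left
      have hb : eSeq m n p (i % n + 1) = .b := (eSeq_succ_eq_b_iff hn h1 h2).mpr hi
      rw [hb]
      show ((.b : IGen m n p), true) = _ ∧ _
      exact ⟨rfl, Nat.one_lt_two⟩
  · rcases hc with ⟨hu', hv'⟩ | ⟨hu', hv'⟩ | ⟨hu', hv'⟩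
    · -- u = (fSeq i, true), v = (fSeq (i%p+1), false)
      subst hu'; subst hv'
      have hi : i = 2 := by
        rcases hu with h | h | h | h
        · exact absurd h (by simp)
        · exact absurd h (by simp)
        · exact absurd h (by simp)
        · rcases h with h | h | ⟨j, h⟩
          · exact (fSeq_eq_a_iff h1 h2).mp h
          · exact absurd h (by simp)
          · exact absurd h (by simp)
      subst hi
      left
      have h3 : fSeq m n p (2 % p + 1) = fSeq m n p 3 := by
        rw [Nat.mod_eq_of_lt (by omega)]
      rw [h3, fSeq_3 hp]
      show ((.a : IGen m n p), true) = _ ∧ _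
      exact ⟨rfl, Nat.one_lt_two⟩
    · -- u = (z, false) ∉ Sxt
      subst hu'
      rcases hu with h | h | h <;> simp_all [Dg]
    · -- u = (fSeq (i%p+1), true), v = (z, true)
      subst hu'; subst hv'
      have hi : i = 1 := by
        rcases hu with h | h | h | h
        · exact absurd h (by simp)
        · exact absurd h (by simp)
        · exact absurd h (by simp)
        · rcases h with h | h | ⟨j, h⟩
          · exact (fSeq_succ_eq_a_iff hp h1 h2).mp h
          · exact absurd h (by simp)
          · exact absurd h (by simp)
      left
      have ha : fSeq m n p (i % p + 1) = .a := (fSeq_succ_eq_a_iff hp h1 h2).mpr hi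
      rw [ha]
      show ((.a : IGen m n p), true) = _ ∧ _
      exact ⟨rfl, Nat.one_lt_two⟩

lemma adj_root_dSeqt {i : ℕ} (h1 : 1 ≤ i) (h2 : i ≤ m) :
    (Link m n p).Adj (.x, true) (dSeq m n p (i % m + 1), true) :=
  link_adj.mpr ⟨by simp [Prod.ext_iff], Or.inr (linkRel_d3 h1 h2)⟩

lemma adj_root_dSeqt' {i : ℕ} (h1 : 1 ≤ i) (h2 : i ≤ m) :
    (Link m n p).Adj (.x, true) (dSeq m n p i, true) := by
  obtain ⟨k, hk1, hk2, hk⟩ := pred_exists h1 h2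
  have := adj_root_dSeqt (m := m) (n := n) (p := p) hk1 hk2
  rwa [hk] at this

/-- members of `Sxt` have a walk of length at most two from the root -/
lemma Sxt_subset_ball (hm : 3 ≤ m) (hn : 3 ≤ n) (hp : 3 ≤ p) :
    Sxt m n p ⊆ ballTwo m n p (.x, true) := by
  rintro ⟨g, b⟩ hv
  cases b with
  | true =>
    rcases hv with rfl | rfl | rfl | hg
    · exact ⟨Walk.nil, by simp⟩
    · -- (y, true) : x̄ - b̄ - ȳ
      have hb : eSeq m n p (n % n + 1) = .b := by rw [Nat.mod_self]; rfl
      have hrel := linkRel_e3 (m := m) (n := n) (p := p) (i := n) (by omega) le_rfl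
      rw [hb] at hrel
      refine ⟨Walk.cons (adj_root_dSeqt' (i := 2) (by omega) (by omega))
        (Walk.cons (link_adj.mpr ⟨by simp [Prod.ext_iff], Or.inl hrel⟩) Walk.nil), by simp⟩
    · -- (z, true) : x̄ - ā - z̄
      have ha : fSeq m n p (1 % p + 1) = .a := by rw [Nat.mod_eq_of_lt (by omega)]; rfl
      have hrel := linkRel_f3 (m := m) (n := n) (p := p) (i := 1) le_rfl (by omega)
      rw [ha] at hrel
      refine ⟨Walk.cons (adj_root_dSeqt' (i := 1) (by omega) (by omega))
        (Walk.cons (link_adj.mpr ⟨by simp [Prod.ext_iff], Or.inl hrel⟩) Walk.nil), by simp⟩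
    · obtain ⟨i, h1, h2, rfl⟩ := Dg_surj hm hg
      exact ⟨Walk.cons (adj_root_dSeqt' h1 h2) Walk.nil, by simp⟩
  | false =>
    rcases hv with hg | rfl | rfl
    · -- (dSeq i, false) : x̄ - (dSeq k bar) - (dSeq i)
      obtain ⟨i, h1, h2, rfl⟩ := Dg_surj hm hg
      obtain ⟨k, hk1, hk2, hk⟩ := pred_exists h1 h2
      refine ⟨Walk.cons (adj_root_dSeqt' hk1 hk2)
        (Walk.cons (link_adj.mpr ⟨by simp [Prod.ext_iff], Or.inl ?_⟩) Walk.nil), by simp⟩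
      have := linkRel_d1 (m := m) (n := n) (p := p) hk1 hk2
      rwa [hk] at this
    · -- (c, false) : x̄ - b̄ - c
      have hc : eSeq m n p (1 % n + 1) = .c := by rw [Nat.mod_eq_of_lt (by omega)]; rfl
      have hrel := linkRel_e1 (m := m) (n := n) (p := p) (i := 1) le_rfl (by omega)
      rw [hc] at hrel
      refine ⟨Walk.cons (adj_root_dSeqt' (i := 2) (by omega) (by omega))
        (Walk.cons (link_adj.mpr ⟨by simp [Prod.ext_iff], Or.inl hrel⟩) Walk.nil), by simp⟩
    · -- (fSeq 3, false) : x̄ - ā - f₃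
      have h3 : fSeq m n p (2 % p + 1) = fSeq m n p 3 := by rw [Nat.mod_eq_of_lt (by omega)]
      have hrel := linkRel_f1 (m := m) (n := n) (p := p) (i := 2) (by omega) (by omega)
      rw [h3] at hrel
      refine ⟨Walk.cons (adj_root_dSeqt' (i := 1) (by omega) (by omega))
        (Walk.cons (link_adj.mpr ⟨?_, Or.inl hrel⟩) Walk.nil), by simp⟩
      rw [fSeq_3 hp]
      simp [Prod.ext_iff]

lemma ball_eq_Sxt (hm : 3 ≤ m) (hn : 3 ≤ n) (hp : 3 ≤ p) :
    ballTwo m n p (.x, true) = Sxt m n p := by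
  apply Set.Subset.antisymm _ (Sxt_subset_ball hm hn hp)
  rintro v ⟨w, hw⟩
  cases w with
  | nil => exact Or.inl rfl
  | cons h w' =>
    obtain ⟨i, h1, h2, rfl⟩ := adj_rootxt h
    cases w' with
    | nil => exact Or.inr (Or.inr (Or.inr (Dg_dSeq _)))
    | cons h2' w'' =>
      cases w'' with
      | nil => exact adj_D_memt hm hn hp (Dg_dSeq _) h2'
      | cons h3 w''' => simp [Walk.length_cons] at hw

/-- The ball of radius 2 around `(x, true)` is a tree. -/
lemma core_true (hm : 3 ≤ m) (hn : 3 ≤ n) (hp : 3 ≤ p) :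
    ((Link m n p).induce (ballTwo m n p (.x, true))).IsTree := by
  rw [ball_eq_Sxt hm hn hp]
  refine isTree_of_parent _ ⟨(.x, true), Or.inl rfl⟩
    (fun v => ⟨parxt m n p v.1, ?memb⟩) (fun v => depxt m n p v.1) ?h1 ?h1' ?h2
  case memb =>
    obtain ⟨⟨g, b⟩, hv⟩ := v
    cases g <;> cases b <;>
      first
        | exact Or.inl rfl
        | exact Or.inr (Or.inr (Or.inr (Or.inl rfl)))
        | exact Or.inr (Or.inr (Or.inr (Or.inr (Or.inl rfl))))
        | exact Or.inr (Or.inr (Or.inr (Dg_dSeq _)))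
  case h1 =>
    rintro ⟨⟨g, b⟩, hv⟩ hne
    have hne' : (g, b) ≠ ((.x : IGen m n p), true) := fun hh => hne (Subtype.ext hh)
    simp only [SimpleGraph.comap_adj, Function.Embedding.coe_subtype]
    cases b with
    | true =>
      rcases hv with rfl | rfl | rfl | hg
      · exact absurd rfl hne'
      · show (Link m n p).Adj (.y, true) (.b, true)
        have hb : eSeq m n p (n % n + 1) = .b := by rw [Nat.mod_self]; rfl
        have hrel := linkRel_e3 (m := m) (n := n) (p := p) (i := n) (by omega) le_rfl
        rw [hb] at hrel
        exact link_adj.mpr ⟨by simp [Prod.ext_iff], Or.inr hrel⟩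
      · show (Link m n p).Adj (.z, true) (.a, true)
        have ha : fSeq m n p (1 % p + 1) = .a := by rw [Nat.mod_eq_of_lt (by omega)]; rfl
        have hrel := linkRel_f3 (m := m) (n := n) (p := p) (i := 1) le_rfl (by omega)
        rw [ha] at hrel
        exact link_adj.mpr ⟨by simp [Prod.ext_iff], Or.inr hrel⟩
      · obtain ⟨i, h1, h2, rfl⟩ := Dg_surj hm hg
        rw [parxt_D_true (Dg_dSeq i)]
        exact (adj_root_dSeqt' h1 h2).symm
    | false =>
      rcases hv with hg | rfl | rfl
      · obtain ⟨i, h1, h2, rfl⟩ := Dg_surj hm hg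
        obtain ⟨k, hk1, hk2, hk⟩ := pred_exists h1 h2
        rw [← hk, parxt_succ hm hk1 hk2]
        exact link_adj.mpr ⟨by simp [Prod.ext_iff], Or.inr (linkRel_d1 hk1 hk2)⟩
      · -- (c, false) ~ (b, true)
        have hc : eSeq m n p (1 % n + 1) = .c := by rw [Nat.mod_eq_of_lt (by omega)]; rfl
        have hrel := linkRel_e1 (m := m) (n := n) (p := p) (i := 1) le_rfl (by omega)
        rw [hc] at hrel
        show (Link m n p).Adj (.c, false) (.b, true)
        exact link_adj.mpr ⟨by simp [Prod.ext_iff], Or.inr hrel⟩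
      · -- (fSeq 3, false) ~ (a, true)
        have h3 : fSeq m n p (2 % p + 1) = fSeq m n p 3 := by rw [Nat.mod_eq_of_lt (by omega)]
        have hrel := linkRel_f1 (m := m) (n := n) (p := p) (i := 2) (by omega) (by omega)
        rw [h3] at hrel
        rw [fSeq_3 hp] at hrel ⊢
        show (Link m n p).Adj (.f ⟨0, by omega⟩, false) (.a, true)
        exact link_adj.mpr ⟨by simp [Prod.ext_iff], Or.inr hrel⟩
  case h1' =>
    rintro ⟨⟨g, b⟩, hv⟩ hne
    have hne' : (g, b) ≠ ((.x : IGen m n p), true) := fun hh => hne (Subtype.ext hh)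
    simp only []
    cases b with
    | true =>
      rcases hv with rfl | rfl | rfl | hg
      · exact absurd rfl hne'
      · show depxt m n p (.b, true) < depxt m n p (.y, true); exact Nat.one_lt_two
      · show depxt m n p (.a, true) < depxt m n p (.z, true); exact Nat.one_lt_two
      · rw [parxt_D_true hg, depxt_D_true hg]
        exact Nat.zero_lt_one
    | false =>
      rcases hv with hg | rfl | rfl
      · obtain ⟨i, h1, h2, rfl⟩ := Dg_surj hm hg
        obtain ⟨k, hk1, hk2, hk⟩ := pred_exists h1 h2
        rw [← hk, parxt_succ hm hk1 hk2, depxt_dSeq_true, depxt_false]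
        exact Nat.one_lt_two
      · show depxt m n p (.b, true) < depxt m n p (.c, false); exact Nat.one_lt_two
      · rw [fSeq_3 hp]
        show depxt m n p (.a, true) < depxt m n p (.f ⟨0, by omega⟩, false)
        exact Nat.one_lt_two
  case h2 =>
    rintro ⟨u, hu⟩ ⟨v, hv⟩ hadj
    simp only [SimpleGraph.comap_adj, Function.Embedding.coe_subtype] at hadj
    rw [link_adj] at hadj
    obtain ⟨hne, hrel | hrel⟩ := hadj
    · rcases rel_parxt hm hn hp hu hrel with ⟨h, hd⟩ | ⟨h, hd⟩
      · exact Or.inl ⟨Subtype.ext h, hd⟩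
      · exact Or.inr ⟨Subtype.ext h, hd⟩
    · rcases rel_parxt hm hn hp hv hrel with ⟨h, hd⟩ | ⟨h, hd⟩
      · exact Or.inr ⟨Subtype.ext h, hd⟩
      · exact Or.inl ⟨Subtype.ext h, hd⟩

end Ball2Tree

namespace Ball2Tree

open SimpleGraph

/-! ### The cyclic symmetry of the link -/

/-- the symmetry `x ↦ z ↦ y ↦ x`, `a ↦ c ↦ b ↦ a`, `d ↦ f ↦ e ↦ d` -/
def sig (m n p : ℕ) : IGen m n p → IGen n p m
  | .x => .z | .y => .x | .z => .y
  | .a => .c | .b => .a | .c => .b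
  | .d i => .f i | .e i => .d i | .f i => .e i

lemma sig_sig_sig {m n p : ℕ} (g : IGen m n p) :
    sig p m n (sig n p m (sig m n p g)) = g := by
  cases g <;> rfl

lemma sig_dSeq {m n p : ℕ} (i : ℕ) : sig m n p (dSeq m n p i) = fSeq n p m i := by
  unfold dSeq fSeq; split_ifs <;> rfl
lemma sig_eSeq {m n p : ℕ} (i : ℕ) : sig m n p (eSeq m n p i) = dSeq n p m i := by
  unfold eSeq dSeq; split_ifs <;> rfl
lemma sig_fSeq {m n p : ℕ} (i : ℕ) : sig m n p (fSeq m n p i) = eSeq n p m i := by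
  unfold fSeq eSeq; split_ifs <;> rfl

/-- the symmetry as a map of link vertices -/
def sigV (m n p : ℕ) (v : LinkVert m n p) : LinkVert n p m := (sig m n p v.1, v.2)

lemma sigV_sigV_sigV {m n p : ℕ} (v : LinkVert m n p) :
    sigV p m n (sigV n p m (sigV m n p v)) = v := by
  obtain ⟨g, b⟩ := v
  simp [sigV, sig_sig_sig]

lemma linkRel_sig {m n p : ℕ} {u v : LinkVert m n p} (h : linkRel m n p u v) :
    linkRel n p m (sigV m n p u) (sigV m n p v) := by
  rcases linkRel_elim h with ⟨i, h1, h2, hc⟩ | ⟨i, h1, h2, hc⟩ | ⟨i, h1, h2, hc⟩ <;>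
    rcases hc with ⟨hu, hv⟩ | ⟨hu, hv⟩ | ⟨hu, hv⟩ <;> subst hu <;> subst hv <;>
    unfold sigV <;> simp only [sig_dSeq, sig_eSeq, sig_fSeq]
  · exact linkRel_f1 h1 h2
  · show linkRel n p m (.z, false) _
    exact linkRel_f2 h1 h2
  · show linkRel n p m _ (.z, true)
    exact linkRel_f3 h1 h2
  · exact linkRel_d1 h1 h2
  · show linkRel n p m (.x, false) _
    exact linkRel_d2 h1 h2
  · show linkRel n p m _ (.x, true)
    exact linkRel_d3 h1 h2
  · exact linkRel_e1 h1 h2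
  · show linkRel n p m (.y, false) _
    exact linkRel_e2 h1 h2
  · show linkRel n p m _ (.y, true)
    exact linkRel_e3 h1 h2

lemma sigV_injective {m n p : ℕ} : Function.Injective (sigV m n p) := by
  intro u v h
  have := congrArg (fun w => sigV p m n (sigV n p m w)) h
  simpa [sigV_sigV_sigV] using this

lemma adj_sig {m n p : ℕ} {u v : LinkVert m n p} (h : (Link m n p).Adj u v) :
    (Link n p m).Adj (sigV m n p u) (sigV m n p v) := by
  rw [link_adj] at h ⊢
  obtain ⟨hne, h | h⟩ := h
  · exact ⟨fun hh => hne (sigV_injective hh), Or.inl (linkRel_sig h)⟩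
  · exact ⟨fun hh => hne (sigV_injective hh), Or.inr (linkRel_sig h)⟩

lemma adj_sig_iff {m n p : ℕ} {u v : LinkVert m n p} :
    (Link n p m).Adj (sigV m n p u) (sigV m n p v) ↔ (Link m n p).Adj u v := by
  constructor
  · intro h
    have h2 := adj_sig (adj_sig h)
    rwa [sigV_sigV_sigV, sigV_sigV_sigV] at h2
  · exact adj_sig

/-- the symmetry as a graph homomorphism -/
def sigHom (m n p : ℕ) : Link m n p →g Link n p m where
  toFun := sigV m n p
  map_rel' := adj_sig

lemma mem_ball_sig {m n p : ℕ} {v u : LinkVert m n p} (h : u ∈ ballTwo m n p v) :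
    sigV m n p u ∈ ballTwo n p m (sigV m n p v) := by
  obtain ⟨w, hw⟩ := h
  exact ⟨w.map (sigHom m n p), (SimpleGraph.Walk.length_map (f := sigHom m n p) w).trans_le hw⟩

lemma mem_ball_sig_iff {m n p : ℕ} {v u : LinkVert m n p} :
    sigV m n p u ∈ ballTwo n p m (sigV m n p v) ↔ u ∈ ballTwo m n p v := by
  constructor
  · intro h
    have h2 := mem_ball_sig (mem_ball_sig h)
    rwa [sigV_sigV_sigV, sigV_sigV_sigV] at h2
  · exact mem_ball_sig

/-- transport of the tree property along the symmetry -/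
lemma isTree_transport {m n p : ℕ} (v : LinkVert m n p)
    (h : ((Link m n p).induce (ballTwo m n p v)).IsTree) :
    ((Link n p m).induce (ballTwo n p m (sigV m n p v))).IsTree := by
  -- build an isomorphism of induced graphs
  have hinv : ∀ u' : LinkVert n p m, sigV m n p (sigV p m n (sigV n p m u')) = u' :=
    fun u' => sigV_sigV_sigV (m := n) (n := p) (p := m) u'
  let eq : {u // u ∈ ballTwo m n p v} ≃ {u' // u' ∈ ballTwo n p m (sigV m n p v)} :=
    { toFun := fun a => ⟨sigV m n p a.1, mem_ball_sig a.2⟩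
      invFun := fun a => ⟨sigV p m n (sigV n p m a.1), by
        have := mem_ball_sig (mem_ball_sig a.2)
        rwa [sigV_sigV_sigV] at this⟩
      left_inv := fun a => Subtype.ext (sigV_sigV_sigV a.1)
      right_inv := fun a => Subtype.ext (hinv a.1) }
  let iso : ((Link m n p).induce (ballTwo m n p v)) ≃g
      ((Link n p m).induce (ballTwo n p m (sigV m n p v))) :=
    { toEquiv := eq
      map_rel_iff' := by
        intro a b
        simp only [SimpleGraph.comap_adj, Function.Embedding.coe_subtype]
        exact adj_sig_iff }
  constructor
  · have hne : Nonempty {u // u ∈ ballTwo m n p v} := h.isConnected.nonempty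
    have : Nonempty {u' // u' ∈ ballTwo n p m (sigV m n p v)} := Nonempty.map eq hne
    refine ⟨fun a b => ?_⟩
    have hr := h.isConnected.preconnected (iso.symm a) (iso.symm b)
    have h2 := hr.map iso.toHom
    simpa using h2
  · intro w c hc
    have hc' := hc.map (f := iso.symm.toHom) (RelIso.injective iso.symm)
    exact h.IsAcyclic _ hc'

end Ball2Tree

/-- If `m, n, p ≥ 3`, then for each top vertex (`x`, `y`, `z`) and each
bottom vertex (`x̄`, `ȳ`, `z̄`) of `L_{m,n,p}`, the subgraph induced on the closed
ball of radius 2 around that vertex is a tree. -/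
theorem radius_two_ball_is_tree (m n p : ℕ) (hm : 3 ≤ m) (hn : 3 ≤ n) (hp : 3 ≤ p) :
    ∀ g ∈ ({IGen.x, IGen.y, IGen.z} : Set (IGen m n p)), ∀ bb : Bool,
      ((Link m n p).induce (ballTwo m n p (g, bb))).IsTree := by
  have core : ∀ (a b c : ℕ), 3 ≤ a → 3 ≤ b → 3 ≤ c → ∀ bb : Bool,
      ((Link a b c).induce (ballTwo a b c (.x, bb))).IsTree := by
    intro a b c ha hb hc bb
    cases bb
    · exact Ball2Tree.core_false ha hb hc
    · exact Ball2Tree.core_true ha hb hc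
  intro g hg bb
  simp only [Set.mem_insert_iff, Set.mem_singleton_iff] at hg
  rcases hg with rfl | rfl | rfl
  · exact core m n p hm hn hp bb
  · -- y : transport twice starting from `Link n p m`
    have t1 := Ball2Tree.isTree_transport (m := n) (n := p) (p := m) (.x, bb)
      (core n p m hn hp hm bb)
    have t2 := Ball2Tree.isTree_transport (m := p) (n := m) (p := n) (.z, bb) t1
    exact t2
  · -- z : transport once starting from `Link p m n`
    exact Ball2Tree.isTree_transport (m := p) (n := m) (p := n) (.x, bb)
      (core p m n hp hm hn bb)
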